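/- arXiv:2003.06057 — 3 statements merged into one kernel-verified Lean document; each statement's English description precedes it below -/
import Mathlib

section
/- For every integer m ≥ 1, there exists an irreducible monic polynomial f ∈ ℤ[X] such that ℚ[X]/(f) is a Galois extension of ℚ and such that for every prime number p not dividing the discriminant disc(f), the reduction f̄ ∈ 𝔽_p[X] has at least m pairwise distinct monic irreducible factors. -/
/-!
Take `f = Φ_n`, where `n` is a product of `m + 2` distinct odd primes; its root field is
cyclotomic, hence Galois. Let `p ∤ N`, where `N` is a product of `k` distinct odd primes `q`.
Every irreducible factor of `Φ_N` mod `p` has degree `ord_N(p)`, so there are `φ(N) / ord_N(p)`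
of them. As each `q - 1` is even, `e = 2 ∏ (q - 1) / 2` is a multiple of every `q - 1`, so
`p ^ e ≡ 1` mod `N` and `ord_N(p) ≤ e = 2 φ(N) / 2 ^ k`: there are at least `2 ^ (k - 1)` factors.
Apply this to `N = n` if `p ∤ n`, and to `N = n / p` if `p ∣ n`, using
`Φ_n ≡ Φ_{n/p} ^ (p - 1)` mod `p`; either way `k ≥ m + 1` and `2 ^ m > m`.
-/

noncomputable section

/-- The resultant of `P` and `Q`, where `P` is viewed as a polynomial of degree `m`
and `Q` as a polynomial of degree `n`, defined as the determinant of the Sylvester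
matrix. -/
def polyResultant {R : Type*} [CommRing R] (m n : ℕ) (P Q : Polynomial R) : R :=
  (Matrix.of fun i j : Fin (m + n) =>
      if (i : ℕ) < n then (if (i : ℕ) ≤ (j : ℕ) then P.coeff ((j : ℕ) - (i : ℕ)) else 0)
      else (if (i : ℕ) - n ≤ (j : ℕ) then Q.coeff ((j : ℕ) - ((i : ℕ) - n)) else 0)).det

/-- The discriminant of a monic polynomial `f`, namely
`(-1)^(n(n-1)/2) · Res(f, f')` where `n = deg f`. -/
def polyDisc {R : Type*} [CommRing R] (f : Polynomial R) : R :=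
  (-1) ^ (f.natDegree * (f.natDegree - 1) / 2) *
    polyResultant f.natDegree (f.natDegree - 1) f (Polynomial.derivative f)

end

open Polynomial UniqueFactorizationMonoid Finset
open scoped Nat

lemma exists_finset_odd_primes (k : ℕ) : ∃ S : Finset ℕ, #S = k ∧ ∀ q ∈ S, q.Prime ∧ q ≠ 2 := by
  obtain ⟨S, hS, hcard⟩ :=
    (Nat.infinite_setOfPred_prime.sdiff (Set.finite_singleton 2)).exists_subset_card_eq k
  exact ⟨S, hcard, fun q hq => hS hq⟩

lemma totient_prod_primes {S : Finset ℕ} (hS : ∀ q ∈ S, q.Prime) :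
    φ (∏ q ∈ S, q) = ∏ q ∈ S, (q - 1) := by
  have h := Nat.totient_mul_prod_primeFactors (∏ q ∈ S, q)
  rw [Nat.primeFactors_prod hS, mul_comm (∏ q ∈ S, q)] at h
  exact Nat.eq_of_mul_eq_mul_right (prod_pos fun q hq => (hS q hq).pos) h

lemma prod_sub_one_eq_two_pow_mul {S : Finset ℕ} (hS : ∀ q ∈ S, q.Prime ∧ q ≠ 2) :
    ∏ q ∈ S, (q - 1) = 2 ^ #S * ∏ q ∈ S, (q - 1) / 2 := by
  rw [← prod_const, ← prod_mul_distrib]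
  exact prod_congr rfl fun q hq =>
    (Nat.two_mul_div_two_of_even ((hS q hq).1.even_sub_one (hS q hq).2)).symm

lemma Nat.Prime.coprime_prod_primes {p : ℕ} (hp : p.Prime) {S : Finset ℕ} (hS : ∀ q ∈ S, q.Prime)
    (hpS : p ∉ S) : p.Coprime (∏ q ∈ S, q) :=
  Nat.Coprime.prod_right fun q hq =>
    (Nat.coprime_primes hp (hS q hq)).2 (by rintro rfl; exact hpS hq)

lemma prod_dvd_pow_sub_one {S : Finset ℕ} (hS : ∀ q ∈ S, q.Prime) {a e : ℕ}
    (ha : a.Coprime (∏ q ∈ S, q)) (he : ∀ q ∈ S, q - 1 ∣ e) : ∏ q ∈ S, q ∣ a ^ e - 1 := by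
  refine prod_primes_dvd _ (fun q hq => (hS q hq).prime) fun q hq => ?_
  obtain ⟨k, rfl⟩ := he q hq
  have h := (Nat.ModEq.pow_totient (ha.coprime_dvd_right (dvd_prod_of_mem _ hq))).pow k
  rw [Nat.totient_prime (hS q hq), ← pow_mul, one_pow] at h
  exact Nat.dvd_of_mod_eq_zero (Nat.sub_mod_eq_zero_of_mod_eq h)

lemma orderOf_unitOfCoprime_dvd {a n e : ℕ} (ha : 0 < a) (h : a.Coprime n)
    (hdvd : n ∣ a ^ e - 1) :
    orderOf (ZMod.unitOfCoprime a h) ∣ e := by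
  refine orderOf_dvd_of_pow_eq_one (Units.ext ?_)
  rw [Units.val_pow_eq_pow_val, ZMod.coe_unitOfCoprime, Units.val_one, ← Nat.cast_pow,
    ← sub_eq_zero, ← Nat.cast_one, ← Nat.cast_sub (Nat.one_le_pow _ _ ha),
    ZMod.natCast_eq_zero_iff]
  exact hdvd

lemma card_normalizedFactors_cyclotomic_mul_orderOf {p n : ℕ} [Fact p.Prime] (h : p.Coprime n) :
    #(normalizedFactors (cyclotomic n (ZMod p))).toFinset * orderOf (ZMod.unitOfCoprime p h) =
      φ n := by
  have hcard := Polynomial.normalizedFactors_cyclotomic_card (K := ZMod p) (p := p) (f := 1)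
    (by simp) (by simpa using h)
  simp only [pow_one] at hcard
  rw [hcard]
  exact Nat.div_mul_cancel (orderOf_dvd_of_pow_eq_one (ZMod.pow_totient _))

open IntermediateField in
lemma IsPrimitiveRoot.isGalois_adjoin {K L : Type*} [Field K] [Field L] [Algebra K L] {n : ℕ}
    [NeZero (n : K)] {ζ : L} (hζ : IsPrimitiveRoot ζ n) : IsGalois K K⟮ζ⟯ := by
  have : NeZero n := NeZero.of_neZero_natCast K
  have : IsCyclotomicExtension {n} K K⟮ζ⟯ := by
    change IsCyclotomicExtension {n} K K⟮ζ⟯.toSubalgebra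
    rw [adjoin_simple_toSubalgebra_of_isAlgebraic
      ((hζ.isIntegral (NeZero.pos n)).tower_top (A := K)).isAlgebraic]
    exact hζ.adjoin_isCyclotomicExtension K
  exact IsCyclotomicExtension.isGalois {n} K K⟮ζ⟯

lemma two_pow_card_le_two_mul_card_normalizedFactors_cyclotomic {p : ℕ} [hp : Fact p.Prime]
    {S : Finset ℕ} (hS : ∀ q ∈ S, q.Prime ∧ q ≠ 2) (hpS : p ∉ S) :
    2 ^ #S ≤ 2 * #(normalizedFactors (cyclotomic (∏ q ∈ S, q) (ZMod p))).toFinset := by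
  set h := ∏ q ∈ S, (q - 1) / 2
  have hprime : ∀ q ∈ S, q.Prime := fun q hq => (hS q hq).1
  have hcop := hp.out.coprime_prod_primes hprime hpS
  have hh : 0 < h := prod_pos fun q hq => Nat.div_pos (by
    have := (hS q hq).1.two_le; have := (hS q hq).2; omega) two_pos
  have hord : orderOf (ZMod.unitOfCoprime p hcop) ≤ 2 * h := by
    refine Nat.le_of_dvd (by positivity) (orderOf_unitOfCoprime_dvd hp.out.pos hcop ?_)
    refine prod_dvd_pow_sub_one hprime hcop fun q hq => ?_
    rw [← Nat.two_mul_div_two_of_even ((hS q hq).1.even_sub_one (hS q hq).2)]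
    exact mul_dvd_mul_left 2 (dvd_prod_of_mem _ hq)
  have hφ : φ (∏ q ∈ S, q) = 2 ^ #S * h :=
    (totient_prod_primes hprime).trans (prod_sub_one_eq_two_pow_mul hS)
  have hcount := card_normalizedFactors_cyclotomic_mul_orderOf hcop
  refine Nat.le_of_mul_le_mul_right ?_ hh
  calc 2 ^ #S * h = _ * orderOf (ZMod.unitOfCoprime p hcop) := by rw [hcount, hφ]
    _ ≤ _ * (2 * h) := Nat.mul_le_mul_left _ hord
    _ = 2 * _ * h := by ring

lemma cyclotomic_prod_erase_dvd {p : ℕ} [hp : Fact p.Prime] {S : Finset ℕ}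
    (hS : ∀ q ∈ S, q.Prime) :
    cyclotomic (∏ q ∈ S.erase p, q) (ZMod p) ∣ cyclotomic (∏ q ∈ S, q) (ZMod p) := by
  by_cases hpS : p ∈ S
  · have hpN := hp.out.coprime_iff_not_dvd.mp <| hp.out.coprime_prod_primes
      (fun q hq => hS q (mem_of_mem_erase hq)) (notMem_erase p S)
    rw [← mul_prod_erase S (fun q => q) hpS, mul_comm,
      cyclotomic_mul_prime_eq_pow_of_not_dvd (ZMod p) hpN]
    exact dvd_pow_self _ (Nat.sub_ne_zero_of_lt hp.out.one_lt)
  · rw [erase_eq_of_notMem hpS]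

lemma Finset.exists_injective_fin_of_le_card {α : Type*} {s : Finset α} {m : ℕ} (h : m ≤ #s) :
    ∃ g : Fin m → α, Function.Injective g ∧ ∀ i, g i ∈ s :=
  ⟨fun i => s.equivFin.symm (Fin.castLE h i),
    Subtype.val_injective.comp (s.equivFin.symm.injective.comp (Fin.castLE_injective h)),
    fun _ => (s.equivFin.symm _).2⟩

open IntermediateField in
theorem exists_irreducible_with_many_factors_mod_p_general (m : ℕ) :
    ∃ f : Polynomial ℤ, f.Monic ∧ Irreducible f ∧
      (∃ α : ℂ, minpoly ℚ α = f.map (Int.castRingHom ℚ) ∧ IsGalois ℚ ℚ⟮α⟯) ∧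
      ∀ p : ℕ, p.Prime → ¬ ((p : ℤ) ∣ polyDisc f) →
        ∃ g : Fin m → Polynomial (ZMod p), Function.Injective g ∧
          ∀ i, (g i).Monic ∧ Irreducible (g i) ∧ g i ∣ f.map (Int.castRingHom (ZMod p)) := by
  obtain ⟨S, hScard, hS⟩ := exists_finset_odd_primes (m + 2)
  set n := ∏ q ∈ S, q
  have hn : 0 < n := prod_pos fun q hq => (hS q hq).1.pos
  have : NeZero n := ⟨hn.ne'⟩
  have hζ := Complex.isPrimitiveRoot_exp n hn.ne'
  refine ⟨cyclotomic n ℤ, cyclotomic.monic n ℤ, cyclotomic.irreducible hn,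
    ⟨_, ?_, hζ.isGalois_adjoin⟩, fun p hp _ => ?_⟩
  · rw [map_cyclotomic_int]
    exact (cyclotomic_eq_minpoly_rat hζ hn).symm
  have : Fact p.Prime := ⟨hp⟩
  have hcount := two_pow_card_le_two_mul_card_normalizedFactors_cyclotomic
    (fun q hq => hS q (mem_of_mem_erase hq)) (notMem_erase p S)
  have hm : m ≤ #(normalizedFactors (cyclotomic (∏ q ∈ S.erase p, q) (ZMod p))).toFinset := by
    have hT : m + 1 ≤ #(S.erase p) := by
      have := pred_card_le_card_erase (s := S) (a := p); omega
    have h2 := (Nat.pow_le_pow_right two_pos hT).trans hcount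
    have := m.lt_two_pow_self
    rw [pow_succ] at h2
    omega
  obtain ⟨g, hg, hgS⟩ := exists_injective_fin_of_le_card hm
  refine ⟨g, hg, fun i => ?_⟩
  obtain ⟨hirr, hmonic, hdvd⟩ :=
    (Polynomial.mem_normalizedFactors_iff (cyclotomic_ne_zero _ _)).mp
      (Multiset.mem_toFinset.mp (hgS i))
  rw [map_cyclotomic_int]
  exact ⟨hmonic, hirr, hdvd.trans (cyclotomic_prod_erase_dvd fun q hq => (hS q hq).1)⟩

open IntermediateField in
/-- **Corollary 1.2.** For every `m ≥ 1` there is an irreducible, monic polynomial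
`f ∈ ℤ[X]` such that `ℚ[X]/(f)` is a Galois extension of `ℚ` (expressed via a complex
root `α` of `f`: `ℚ(α)` is Galois over `ℚ`) and such that, for every prime `p` not
dividing `disc(f)`, the reduction `f̄ ∈ 𝔽_p[X]` has at least `m` pairwise distinct monic
irreducible factors. -/
theorem exists_irreducible_with_many_factors_mod_p (m : ℕ) (hm : 1 ≤ m) :
    ∃ f : Polynomial ℤ, f.Monic ∧ Irreducible f ∧
      (∃ α : ℂ, minpoly ℚ α = f.map (Int.castRingHom ℚ) ∧ IsGalois ℚ ℚ⟮α⟯) ∧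
      ∀ p : ℕ, p.Prime → ¬ ((p : ℤ) ∣ polyDisc f) →
        ∃ g : Fin m → Polynomial (ZMod p), Function.Injective g ∧
          ∀ i, (g i).Monic ∧ Irreducible (g i) ∧ g i ∣ f.map (Int.castRingHom (ZMod p)) :=
  exists_irreducible_with_many_factors_mod_p_general m
end

section
/- For every polynomial f ∈ ℚ[X], the Euler product ζ_f(s) = ∏_{p ∈ 𝒫_f} ζ_{f,p}(s) converges for every s ∈ ℂ with Re(s) > 1, and ζ_f defines a holomorphic function on the half-plane {s ∈ ℂ : Re(s) > 1}. -/
open Polynomial UniqueFactorizationMonoid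

noncomputable section

/-- The set `𝒫_f` of primes `p` such that `f ∈ ℤ_(p)[X]`, i.e. no coefficient of `f`
has a denominator divisible by `p`. -/
def polyPrimes (f : Polynomial ℚ) : Set ℕ :=
  {p | p.Prime ∧ ∀ n : ℕ, ¬ (p ∣ (f.coeff n).den)}

/-- The reduction `f̄ ∈ 𝔽_p[X]` of `f ∈ ℤ_(p)[X] ⊆ ℚ[X]` modulo `p`,
obtained by reducing each coefficient `num/den` to `num * den⁻¹` in `ZMod p`. -/
def redMod (p : ℕ) (f : Polynomial ℚ) : Polynomial (ZMod p) :=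
  f.sum fun n c => Polynomial.C ((c.num : ZMod p) * ((c.den : ZMod p))⁻¹) * Polynomial.X ^ n

/-- The factorization pattern of a polynomial `h` over a field: the multiset of pairs
`(multiplicity, degree)` over the distinct irreducible factors of `h`. -/
def pattern {K : Type*} [Field K] (h : Polynomial K) : Multiset (ℕ × ℕ) := by
  classical
  exact (normalizedFactors h).toFinset.val.map
    fun g => ((normalizedFactors h).count g, g.natDegree)

/-- The factorization pattern of `f ∈ ℚ[X]` modulo a prime `p`. -/
def patternMod (p : ℕ) (f : Polynomial ℚ) : Multiset (ℕ × ℕ) :=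
  if hp : p.Prime then
    haveI : Fact p.Prime := ⟨hp⟩
    pattern (redMod p f)
  else 0

/-- The Euler factor `ζ_{f,p}(s) = ∏_j (1 - p^{-deg(f_j)·s})^{-α_j}`. -/
def eulerFactor (f : Polynomial ℚ) (p : ℕ) (s : ℂ) : ℂ :=
  ((patternMod p f).map fun ad => ((1 - (p : ℂ) ^ (-(ad.2 : ℂ) * s))⁻¹) ^ ad.1).prod

/-- The global zeta function `ζ_f(s) = ∏_{p ∈ 𝒫_f} ζ_{f,p}(s)`. -/
def zetaPoly (f : Polynomial ℚ) (s : ℂ) : ℂ :=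
  ∏' p : polyPrimes f, eulerFactor f ↑p s

end

/-
At a prime `p` the Euler factor is the exponential of `∑ⱼ -αⱼ log (1 - p^{-dⱼ s})`. Since
`∑ⱼ αⱼ ≤ deg f̄ ≤ deg f` and `‖log (1 - z)‖ ≤ 3/2 ‖z‖` for `‖z‖ ≤ 1/2`, this logarithm is bounded
by `3/2 · deg f · p^{-σ}` on `Re s ≥ σ ≥ 1`. For `σ > 1` these bounds are summable, so the
logarithms sum to a holomorphic function on `Re s > σ`, and `ζ_f` is its exponential.
-/

open Complex

section Pattern

variable {K : Type*} [Field K]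

lemma Polynomial.card_normalizedFactors_le_natDegree [DecidableEq K] (h : K[X]) :
    Multiset.card (normalizedFactors h) ≤ h.natDegree := by
  rcases eq_or_ne h 0 with rfl | h0
  · simp
  calc Multiset.card (normalizedFactors h)
      = ((normalizedFactors h).map fun _ => 1).sum := by simp
    _ ≤ ((normalizedFactors h).map natDegree).sum :=
        Multiset.sum_map_le_sum_map _ _ fun g hg =>
          (irreducible_of_normalized_factor g hg).natDegree_pos
    _ = (normalizedFactors h).prod.natDegree :=
        (natDegree_multiset_prod _ (zero_notMem_normalizedFactors h)).symm
    _ ≤ h.natDegree := natDegree_le_of_dvd (prod_normalizedFactors h0).dvd h0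

lemma sum_fst_pattern_le_natDegree (h : K[X]) :
    ((pattern h).map Prod.fst).sum ≤ h.natDegree := by
  classical
  rw [pattern, Multiset.map_map]
  exact (Multiset.toFinset_sum_count_eq _).trans_le (card_normalizedFactors_le_natDegree h)

lemma one_le_snd_of_mem_pattern {h : K[X]} {ad : ℕ × ℕ} (had : ad ∈ pattern h) : 1 ≤ ad.2 := by
  classical
  obtain ⟨g, hg, rfl⟩ := Multiset.mem_map.mp had
  exact (irreducible_of_normalized_factor g (Multiset.mem_toFinset.mp hg)).natDegree_pos

end Pattern

lemma natDegree_redMod_le (p : ℕ) (f : ℚ[X]) : (redMod p f).natDegree ≤ f.natDegree := by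
  rw [redMod, Polynomial.sum_def]
  exact natDegree_sum_le_of_forall_le _ _ fun n hn =>
    (natDegree_C_mul_X_pow_le _ n).trans (le_natDegree_of_mem_supp n hn)

lemma sum_fst_patternMod_le (p : ℕ) (f : ℚ[X]) :
    ((patternMod p f).map Prod.fst).sum ≤ f.natDegree := by
  unfold patternMod
  split_ifs with hp
  · have : Fact p.Prime := ⟨hp⟩
    exact (sum_fst_pattern_le_natDegree _).trans (natDegree_redMod_le p f)
  · simp

lemma one_le_snd_of_mem_patternMod {p : ℕ} {f : ℚ[X]} {ad : ℕ × ℕ}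
    (had : ad ∈ patternMod p f) : 1 ≤ ad.2 := by
  unfold patternMod at had
  split_ifs at had with hp
  · have : Fact p.Prime := ⟨hp⟩
    exact one_le_snd_of_mem_pattern had
  · simp at had

section LogEulerFactor

lemma norm_natCast_cpow_neg_mul_le {p d : ℕ} (hp : 1 ≤ p) (hd : 1 ≤ d) {σ : ℝ} (hσ : 0 ≤ σ)
    {s : ℂ} (hs : σ ≤ s.re) : ‖(p : ℂ) ^ (-(d : ℂ) * s)‖ ≤ (p : ℝ) ^ (-σ) := by
  rw [norm_natCast_cpow_of_pos hp]
  refine Real.rpow_le_rpow_of_exponent_le (mod_cast hp) ?_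
  have hd' : (1 : ℝ) ≤ d := mod_cast hd
  simp only [mul_re, neg_re, natCast_re, neg_im, natCast_im, neg_zero, zero_mul, sub_zero]
  nlinarith

lemma natCast_rpow_neg_le_half {p : ℕ} (hp : 2 ≤ p) {σ : ℝ} (hσ : 1 ≤ σ) :
    (p : ℝ) ^ (-σ) ≤ 1 / 2 := by
  have hp' : (2 : ℝ) ≤ p := mod_cast hp
  calc (p : ℝ) ^ (-σ) ≤ (p : ℝ) ^ (-1 : ℝ) :=
        Real.rpow_le_rpow_of_exponent_le (by linarith) (by linarith)
    _ ≤ 1 / 2 := by rw [Real.rpow_neg_one, one_div]; exact inv_anti₀ two_pos hp'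

lemma one_sub_natCast_cpow_neg_mul_mem_slitPlane {p d : ℕ} (hp : 2 ≤ p) (hd : 1 ≤ d) {s : ℂ}
    (hs : 0 < s.re) : 1 - (p : ℂ) ^ (-(d : ℂ) * s) ∈ slitPlane := by
  rw [sub_eq_add_neg]
  refine mem_slitPlane_of_norm_lt_one ?_
  rw [norm_neg, norm_natCast_cpow_of_pos (by omega)]
  refine Real.rpow_lt_one_of_one_lt_of_neg (mod_cast hp) ?_
  have hd' : (1 : ℝ) ≤ d := mod_cast hd
  simp only [mul_re, neg_re, natCast_re, neg_im, natCast_im, neg_zero, zero_mul, sub_zero]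
  nlinarith

lemma DifferentiableOn.multisetSum_map {ι 𝕜 E F : Type*} [NontriviallyNormedField 𝕜]
    [NormedAddCommGroup E] [NormedSpace 𝕜 E] [NormedAddCommGroup F] [NormedSpace 𝕜 F]
    {U : Set E} {g : ι → E → F} (m : Multiset ι) (hg : ∀ i ∈ m, DifferentiableOn 𝕜 (g i) U) :
    DifferentiableOn 𝕜 (fun x => (m.map fun i => g i x).sum) U := by
  induction m using Multiset.induction_on with
  | empty => simp [differentiableOn_const]
  | cons i m ih =>
    simp only [Multiset.map_cons, Multiset.sum_cons]
    exact (hg i (Multiset.mem_cons_self i m)).add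
      (ih fun j hj => hg j (Multiset.mem_cons_of_mem hj))

noncomputable def logEulerFactor (m : Multiset (ℕ × ℕ)) (p : ℕ) (s : ℂ) : ℂ :=
  (m.map fun ad => -(ad.1 : ℂ) * log (1 - (p : ℂ) ^ (-(ad.2 : ℂ) * s))).sum

variable {m : Multiset (ℕ × ℕ)} {p : ℕ}

lemma exp_logEulerFactor (hp : 2 ≤ p) (hm : ∀ ad ∈ m, 1 ≤ ad.2) {s : ℂ} (hs : 0 < s.re) :
    exp (logEulerFactor m p s)
      = (m.map fun ad => ((1 - (p : ℂ) ^ (-(ad.2 : ℂ) * s))⁻¹) ^ ad.1).prod := by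
  rw [logEulerFactor, exp_multiset_sum, Multiset.map_map]
  refine congrArg _ (Multiset.map_congr rfl fun ad had => ?_)
  have hne := slitPlane_ne_zero (one_sub_natCast_cpow_neg_mul_mem_slitPlane hp (hm ad had) hs)
  rw [Function.comp_apply, neg_mul, ← mul_neg, exp_nat_mul, exp_neg, exp_log hne]

lemma norm_logEulerFactor_le (hp : 2 ≤ p) (hm : ∀ ad ∈ m, 1 ≤ ad.2) {σ : ℝ} (hσ : 1 ≤ σ)
    {s : ℂ} (hs : σ ≤ s.re) :
    ‖logEulerFactor m p s‖ ≤ ((m.map Prod.fst).sum : ℝ) * (3 / 2 * (p : ℝ) ^ (-σ)) := by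
  have hterm : ∀ ad ∈ m, ‖-(ad.1 : ℂ) * log (1 - (p : ℂ) ^ (-(ad.2 : ℂ) * s))‖
      ≤ ad.1 * (3 / 2 * (p : ℝ) ^ (-σ)) := by
    intro ad had
    have hz := norm_natCast_cpow_neg_mul_le (by omega : 1 ≤ p) (hm ad had) (by linarith) hs
    have hz' : ‖-(p : ℂ) ^ (-(ad.2 : ℂ) * s)‖ ≤ 1 / 2 := by
      rw [norm_neg]; exact hz.trans (natCast_rpow_neg_le_half hp hσ)
    rw [norm_mul, norm_neg, Complex.norm_natCast, sub_eq_add_neg]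
    gcongr
    calc _ ≤ 3 / 2 * ‖-(p : ℂ) ^ (-(ad.2 : ℂ) * s)‖ := norm_log_one_add_half_le_self hz'
      _ ≤ _ := by rw [norm_neg]; gcongr
  calc ‖logEulerFactor m p s‖
      ≤ (m.map fun ad => ‖-(ad.1 : ℂ) * log (1 - (p : ℂ) ^ (-(ad.2 : ℂ) * s))‖).sum := by
        rw [logEulerFactor]
        exact (norm_multiset_sum_le _).trans_eq (by rw [Multiset.map_map]; rfl)
    _ ≤ (m.map fun ad => (ad.1 : ℝ) * (3 / 2 * (p : ℝ) ^ (-σ))).sum :=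
        Multiset.sum_map_le_sum_map _ _ hterm
    _ = _ := by rw [Multiset.sum_map_mul_right, Nat.cast_multiset_sum, Multiset.map_map]; rfl

lemma differentiableOn_logEulerFactor (hp : 2 ≤ p) (hm : ∀ ad ∈ m, 1 ≤ ad.2) :
    DifferentiableOn ℂ (logEulerFactor m p) {s | 0 < s.re} := by
  refine DifferentiableOn.multisetSum_map m fun ad had s hs =>
    DifferentiableAt.differentiableWithinAt ?_
  have hp0 : (p : ℂ) ≠ 0 := by exact_mod_cast (show p ≠ 0 by omega)
  refine ((differentiableAt_log ?_).comp s ((differentiableAt_const _).sub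
    ((differentiableAt_id.const_mul _).const_cpow (Or.inl hp0)))).const_mul _
  exact one_sub_natCast_cpow_neg_mul_mem_slitPlane hp (hm ad had) hs

end LogEulerFactor

section ZetaPoly

variable (f : ℚ[X]) {p : ℕ} {σ : ℝ} {s : ℂ}

lemma eulerFactor_eq_exp_logEulerFactor (hp : p.Prime) (hs : 0 < s.re) :
    eulerFactor f p s = exp (logEulerFactor (patternMod p f) p s) :=
  (exp_logEulerFactor hp.two_le (fun _ => one_le_snd_of_mem_patternMod) hs).symm

lemma norm_logEulerFactor_patternMod_le (hp : p.Prime) (hσ : 1 ≤ σ) (hs : σ ≤ s.re) :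
    ‖logEulerFactor (patternMod p f) p s‖ ≤ f.natDegree * (3 / 2 * (p : ℝ) ^ (-σ)) :=
  (norm_logEulerFactor_le hp.two_le (fun _ => one_le_snd_of_mem_patternMod) hσ hs).trans
    (by gcongr; exact_mod_cast sum_fst_patternMod_le p f)

lemma summable_natDegree_mul_rpow_neg (hσ : 1 < σ) :
    Summable fun p : polyPrimes f => f.natDegree * (3 / 2 * ((p : ℕ) : ℝ) ^ (-σ)) :=
  (((Real.summable_nat_rpow.mpr (by linarith)).subtype _).mul_left _).mul_left _

lemma hasProd_eulerFactor (hs : 1 < s.re) :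
    HasProd (fun p : polyPrimes f => eulerFactor f p s)
      (exp (∑' p : polyPrimes f, logEulerFactor (patternMod p f) p s)) := by
  have hsum : Summable fun p : polyPrimes f => logEulerFactor (patternMod p f) p s :=
    (summable_natDegree_mul_rpow_neg f hs).of_norm_bounded
      fun p => norm_logEulerFactor_patternMod_le f p.2.1 hs.le le_rfl
  exact hsum.hasSum.cexp.congr_fun fun p =>
    eulerFactor_eq_exp_logEulerFactor f p.2.1 (by linarith)

lemma differentiableOn_zetaPoly_of_one_lt (hσ : 1 < σ) :
    DifferentiableOn ℂ (zetaPoly f) {s | σ < s.re} := by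
  have hsub : {s : ℂ | σ < s.re} ⊆ {s | 0 < s.re} :=
    fun s (hs : σ < s.re) => show 0 < s.re by linarith
  have hlog : DifferentiableOn ℂ
      (fun s => ∑' p : polyPrimes f, logEulerFactor (patternMod p f) p s) {s | σ < s.re} :=
    differentiableOn_tsum_of_summable_norm (summable_natDegree_mul_rpow_neg f hσ)
      (fun p => (differentiableOn_logEulerFactor p.2.1.two_le
        fun _ => one_le_snd_of_mem_patternMod).mono hsub)
      (isOpen_lt continuous_const continuous_re)
      fun p s hs => norm_logEulerFactor_patternMod_le f p.2.1 hσ.le hs.le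
  exact (differentiable_exp.comp_differentiableOn hlog).congr fun s hs =>
    (hasProd_eulerFactor f (hσ.trans hs)).tprod_eq

end ZetaPoly

/-- **Lemma 3.1.** For every `f ∈ ℚ[X]`, the Euler product
`ζ_f(s) = ∏_{p ∈ 𝒫_f} ζ_{f,p}(s)` converges for every `s` with `Re(s) > 1`,
and `ζ_f` defines a holomorphic function on the half-plane `{Re(s) > 1}`. -/
theorem zetaPoly_multipliable_and_holomorphic (f : Polynomial ℚ) :
    (∀ s : ℂ, 1 < s.re → Multipliable fun p : polyPrimes f => eulerFactor f ↑p s) ∧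
      DifferentiableOn ℂ (zetaPoly f) {s : ℂ | 1 < s.re} := by
  refine ⟨fun s hs => (hasProd_eulerFactor f hs).multipliable, fun s (hs : 1 < s.re) => ?_⟩
  obtain ⟨σ, hσ, hσs⟩ := exists_between hs
  exact ((differentiableOn_zetaPoly_of_one_lt f hσ).differentiableAt
    ((isOpen_lt continuous_const continuous_re).mem_nhds hσs)).differentiableWithinAt
end

section
/- For f ∈ ℚ[X], let 𝒵_f ⊆ 𝒫_f be the set of those primes p ∈ 𝒫_f such that the reduction f̄ ∈ 𝔽_p[X] has a zero in 𝔽_p. Then 𝒵_f has finite cardinality if and only if deg(f) = 0, i.e., if and only if f is a nonzero constant polynomial. -/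
open Polynomial UniqueFactorizationMonoid

/-!
Clearing denominators, `d • f = g` for some `g ∈ ℤ[X]`, and for primes `p ∤ d` the zeros of `f̄`
in `𝔽_p` are those of `ḡ`. So the question is Schur's theorem: a nonconstant `g ∈ ℤ[X]` has
infinitely many prime divisors among its values. If `c = g(0) ≠ 0` and `P ≠ 0`, then
`g(cPk) = c(1 + Ps)` for some `s`, and choosing `k` with `g(cPk) ≠ ±c` makes `1 + Ps ≠ ±1`;
any prime factor of `1 + Ps` divides a value of `g` and not `P`. Taking `P = N!` gives such
primes beyond every `N`. For a nonzero constant `a`, on the other hand, `f̄` can only vanish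
modulo the finitely many primes dividing the numerator of `a`.
-/

namespace Polynomial

theorem exists_eval_ne {R : Type*} [CommRing R] [IsDomain R] [Infinite R] {g : R[X]}
    (hg : 0 < g.natDegree) (a : R) : ∃ x, g.eval x ≠ a := by
  by_contra! h
  have : g - C a = 0 := zero_of_eval_zero _ fun x => by simp [h x]
  rw [sub_eq_zero.mp this, natDegree_C] at hg
  exact hg.false

theorem exists_prime_dvd_eval_not_dvd {g : ℤ[X]} (hg : 0 < g.natDegree) (hg0 : g.eval 0 ≠ 0)
    {P : ℤ} (hP : P ≠ 0) : ∃ p : ℕ, p.Prime ∧ ¬ (p : ℤ) ∣ P ∧ ∃ n, (p : ℤ) ∣ g.eval n := by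
  set c := g.eval 0
  -- squaring turns the two conditions `g(cPk) ≠ ±c` into one
  have hdeg : 0 < (g.comp (C (c * P) * X) ^ 2).natDegree := by
    rw [natDegree_pow, natDegree_comp, natDegree_C_mul (mul_ne_zero hg0 hP), natDegree_X]
    positivity
  obtain ⟨k, hk⟩ := exists_eval_ne hdeg (c ^ 2)
  set v := g.eval (c * P * k)
  have hvc : v ^ 2 ≠ c ^ 2 := by simpa [eval_comp] using hk
  obtain ⟨s, hs⟩ : c * P ∣ v - c :=
    (dvd_mul_right _ k).trans (by simpa using sub_dvd_eval_sub (c * P * k) 0 g)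
  have hv : v = c * (1 + P * s) := by linear_combination hs
  have hw : (1 + P * s).natAbs ≠ 1 := by
    intro h
    apply hvc
    rw [hv, mul_pow, ← Int.natAbs_sq (1 + P * s), h]
    simp
  obtain ⟨p, hp, hpw⟩ := Int.exists_prime_and_dvd hw
  refine ⟨p.natAbs, Int.prime_iff_natAbs_prime.mp hp, fun hpP => ?_, c * P * k, ?_⟩
  · exact hp.not_dvd_one ((dvd_add_left ((Int.natAbs_dvd.mp hpP).mul_right s)).mp hpw)
  · change _ ∣ v
    rw [hv]
    exact (Int.natAbs_dvd.mpr hpw).mul_left c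

theorem infinite_setOf_prime_dvd_eval {g : ℤ[X]} (hg : 0 < g.natDegree) :
    {p : ℕ | p.Prime ∧ ∃ n : ℤ, (p : ℤ) ∣ g.eval n}.Infinite := by
  by_cases hg0 : g.eval 0 = 0
  · exact Nat.infinite_setOfPred_prime.mono fun p hp => ⟨hp, 0, by simp [hg0]⟩
  refine Set.infinite_of_forall_exists_gt fun N => ?_
  obtain ⟨p, hp, hpN, hpg⟩ :=
    exists_prime_dvd_eval_not_dvd hg hg0 (Int.natCast_ne_zero.mpr N.factorial_ne_zero)
  exact ⟨p, ⟨hp, hpg⟩, not_le.mp fun h =>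
    hpN (Int.natCast_dvd_natCast.mpr (Nat.dvd_factorial hp.pos h))⟩

theorem exists_map_intCast_eq_C_mul (f : ℚ[X]) : ∃ (g : ℤ[X]) (d : ℕ), d ≠ 0 ∧
    (∀ n, (f.coeff n).den ∣ d) ∧ g.map (Int.castRingHom ℚ) = C (d : ℚ) * f := by
  set d := ∏ n ∈ f.support, (f.coeff n).den
  have hd : ∀ n, (f.coeff n).den ∣ d := fun n => by
    by_cases h : n ∈ f.support
    · exact Finset.dvd_prod_of_mem _ h
    · simp [notMem_support_iff.mp h]
  have hlift : C (d : ℚ) * f ∈ lifts (Int.castRingHom ℚ) := by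
    refine (lifts_iff_coeff_lifts _).mpr fun n => ?_
    obtain ⟨e, he⟩ := hd n
    refine ⟨(f.coeff n).num * e, ?_⟩
    rw [coeff_C_mul, he, eq_intCast, Int.cast_mul, Nat.cast_mul, ← Rat.mul_den_eq_num]
    push_cast
    ring
  obtain ⟨g, hg⟩ := (mem_lifts _).mp hlift
  exact ⟨g, d, Finset.prod_ne_zero_iff.mpr fun n _ => (f.coeff n).den_ne_zero, hd, hg⟩

end Polynomial

theorem coeff_redMod (p : ℕ) (f : ℚ[X]) (n : ℕ) :
    (redMod p f).coeff n = ((f.coeff n).num : ZMod p) * ((f.coeff n).den : ZMod p)⁻¹ := by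
  rw [redMod, Polynomial.sum_def, finsetSum_coeff]
  simp_rw [coeff_C_mul_X_pow]
  rw [Finset.sum_ite_eq]
  split_ifs with h
  · rfl
  · simp [notMem_support_iff.mp h]

theorem redMod_C (p : ℕ) (a : ℚ) :
    redMod p (C a) = C ((a.num : ZMod p) * (a.den : ZMod p)⁻¹) := by
  ext n
  rw [coeff_redMod, coeff_C, coeff_C]
  split_ifs <;> simp

theorem map_eq_C_mul_redMod {f : ℚ[X]} {g : ℤ[X]} {d : ℕ}
    (hg : g.map (Int.castRingHom ℚ) = C (d : ℚ) * f) {p : ℕ} [Fact p.Prime]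
    (hp : ∀ n, ¬ p ∣ (f.coeff n).den) :
    g.map (Int.castRingHom (ZMod p)) = C (d : ZMod p) * redMod p f := by
  ext n
  have hden : ((f.coeff n).den : ZMod p) ≠ 0 := by
    rw [Ne, ZMod.natCast_eq_zero_iff]
    exact hp n
  have hgn : g.coeff n * (f.coeff n).den = d * (f.coeff n).num := by
    have hq : (g.coeff n : ℚ) = d * f.coeff n := by simpa using congrArg (coeff · n) hg
    exact_mod_cast (by rw [hq, mul_assoc, Rat.mul_den_eq_num] :
      (g.coeff n : ℚ) * (f.coeff n).den = d * (f.coeff n).num)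
  rw [coeff_map, coeff_C_mul, coeff_redMod, eq_intCast, ← mul_assoc, eq_mul_inv_iff_mul_eq₀ hden]
  exact_mod_cast congrArg (Int.cast : ℤ → ZMod p) hgn

theorem infinite_setOf_prime_redMod_root {f : ℚ[X]} (hf : 0 < f.natDegree) :
    {p | p ∈ polyPrimes f ∧ ∃ x : ZMod p, (redMod p f).eval x = 0}.Infinite := by
  obtain ⟨g, d, hd0, hd, hg⟩ := exists_map_intCast_eq_C_mul f
  have hgdeg : g.natDegree = f.natDegree := by
    rw [← natDegree_map_eq_of_injective (RingHom.injective_int (Int.castRingHom ℚ)) g, hg,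
      natDegree_C_mul (by exact_mod_cast hd0)]
  have hfin : {p : ℕ | p ∣ d}.Finite :=
    (Set.finite_Iic d).subset fun p hp => Nat.le_of_dvd (Nat.pos_of_ne_zero hd0) hp
  refine ((infinite_setOf_prime_dvd_eval (hgdeg ▸ hf)).sdiff hfin).mono ?_
  rintro p ⟨⟨hp, n, hpn⟩, hpd⟩
  have : Fact p.Prime := ⟨hp⟩
  have hpf : ∀ k, ¬ p ∣ (f.coeff k).den := fun k h => hpd (h.trans (hd k))
  refine ⟨⟨hp, hpf⟩, n, ?_⟩
  have h := congrArg (eval (n : ZMod p)) (map_eq_C_mul_redMod hg hpf)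
  rw [eval_intCast_map, Int.cast_id, eval_mul, eval_C, eq_intCast,
    (ZMod.intCast_zmod_eq_zero_iff_dvd _ _).mpr hpn] at h
  exact (mul_eq_zero.mp h.symm).resolve_left
    (mt (ZMod.natCast_eq_zero_iff _ _).mp hpd)

theorem finite_setOf_prime_redMod_C_root {a : ℚ} (ha : a ≠ 0) :
    {p | p ∈ polyPrimes (C a) ∧ ∃ x : ZMod p, (redMod p (C a)).eval x = 0}.Finite := by
  refine (Set.finite_Iic a.num.natAbs).subset ?_
  rintro p ⟨⟨hp, hden⟩, x, hx⟩
  have : Fact p.Prime := ⟨hp⟩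
  have hden' : (a.den : ZMod p) ≠ 0 := by
    rw [Ne, ZMod.natCast_eq_zero_iff]
    simpa using hden 0
  rw [redMod_C, eval_C, mul_eq_zero, inv_eq_zero, or_iff_left hden',
    ZMod.intCast_zmod_eq_zero_iff_dvd] at hx
  exact Nat.le_of_dvd (Int.natAbs_pos.mpr (Rat.num_ne_zero.mpr ha)) (Int.natCast_dvd.mp hx)

/-- **Corollary 4.4 (Schur).** For `f ∈ ℚ[X]`, let `𝒵_f ⊆ 𝒫_f` be the set of primes
`p ∈ 𝒫_f` such that the reduction `f̄ ∈ 𝔽_p[X]` has a zero in `𝔽_p`. Then `𝒵_f` is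
finite if and only if `deg(f) = 0`, i.e. `f` is a nonzero constant. -/
theorem finite_zeros_mod_p_iff_degree_eq_zero (f : Polynomial ℚ) :
    {p : ℕ | p ∈ polyPrimes f ∧ ∃ x : ZMod p, (redMod p f).eval x = 0}.Finite ↔
      f.degree = 0 := by
  constructor
  · intro hfin
    by_contra hdeg
    rcases eq_or_ne f 0 with rfl | hf0
    · exact hfin.not_infinite (Nat.infinite_setOfPred_prime.mono fun p hp =>
        ⟨⟨hp, by simp [hp.ne_one]⟩, 0, by simp [redMod]⟩)
    · exact infinite_setOf_prime_redMod_root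
        (Nat.pos_of_ne_zero fun h => hdeg (by rw [degree_eq_natDegree hf0, h]; rfl)) hfin
  · intro hdeg
    rw [eq_C_of_degree_eq_zero hdeg]
    exact finite_setOf_prime_redMod_C_root (coeff_ne_zero_of_eq_degree hdeg)
end
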